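/- Under the hypotheses of the jump-angle lemma (μ(t) the perturbed co-normal with derivative ((I−τ⊗τ)∂X − ∂X^⊤)μ at t=0, and the projected averaged normal P^⊥_{τ(t)}(n̄) with value n̄ at t = 0 satisfying n̄·τ = 0, ‖n̄‖ = 1, |μ·n̄| < 1), the derivative of the angle satisfies d/dt arccos(μ(t) · P^⊥_{τ(t)}(n̄)) |_{t=0} = −((∂X − ∂X^⊤)μ · n̄) / √(1 − (μ·n̄)²). In particular, only the skew-symmetric part of ∂X contributes. -/

import Mathlib

/-!
At `t = 0` the averaged normal is already orthogonal to the edge, so the normalisation in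
`P^⊥_{τ(t)}(n̄)` is stationary and the projection only moves `n̄` along `τ`; as the co-normal
is orthogonal to `τ`, this motion is invisible in `μ · P`. Hence `(μ · P)'(0) = μ'(0) · n̄`, and
the `τ ⊗ τ` part of `μ'(0)` drops out against `n̄` for the same reason, leaving `(∂X − ∂Xᵀ) μ · n̄`.
The chain rule for `arccos` gives the factor `−1 / √(1 − (μ · n̄)²)`.
-/

open Matrix

/-- Euclidean norm on `Fin d → ℝ`. -/
noncomputable def nrm {d : ℕ} (v : Fin d → ℝ) : ℝ := Real.sqrt (v ⬝ᵥ v)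

lemma nrm_eq_one_iff {d : ℕ} {v : Fin d → ℝ} : nrm v = 1 ↔ v ⬝ᵥ v = 1 :=
  Real.sqrt_eq_one

/-- The paper's `P^⊥_τ(n)`. -/
noncomputable def projPerp {d : ℕ} (τ n : Fin d → ℝ) : Fin d → ℝ :=
  (nrm (n - (n ⬝ᵥ τ) • τ))⁻¹ • (n - (n ⬝ᵥ τ) • τ)

theorem HasDerivAt.dotProduct {𝕜 ι : Type*} [NontriviallyNormedField 𝕜] [Fintype ι]
    {u w : 𝕜 → ι → 𝕜} {u' w' : ι → 𝕜} {x : 𝕜}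
    (hu : HasDerivAt u u' x) (hw : HasDerivAt w w' x) :
    HasDerivAt (fun t => u t ⬝ᵥ w t) (u' ⬝ᵥ w x + u x ⬝ᵥ w') x := by
  simp only [_root_.dotProduct, ← Finset.sum_add_distrib]
  exact HasDerivAt.fun_sum fun i _ => (hasDerivAt_pi.mp hu i).mul (hasDerivAt_pi.mp hw i)

theorem HasDerivAt.arccos {f : ℝ → ℝ} {f' x : ℝ} (hf : HasDerivAt f f' x) (h : |f x| < 1) :
    HasDerivAt (fun t => Real.arccos (f t)) (-f' / √(1 - f x ^ 2)) x := by
  obtain ⟨hlo, hhi⟩ := abs_lt.mp h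
  exact ((Real.hasDerivAt_arccos hlo.ne' hhi.ne).comp x hf).congr_deriv (by ring)

lemma dotProduct_self_sub_smul_of_dotProduct_self_eq_one {ι R : Type*} [Fintype ι] [CommRing R]
    {τ : ι → R} (hτ : τ ⬝ᵥ τ = 1) (n : ι → R) :
    (n - (n ⬝ᵥ τ) • τ) ⬝ᵥ (n - (n ⬝ᵥ τ) • τ) = n ⬝ᵥ n - (n ⬝ᵥ τ) ^ 2 := by
  simp only [dotProduct_sub, sub_dotProduct, dotProduct_smul, smul_dotProduct, smul_eq_mul, hτ,
    dotProduct_comm τ n]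
  ring

lemma projPerp_eq_self {d : ℕ} {τ n : Fin d → ℝ} (hn : n ⬝ᵥ n = 1) (hnτ : n ⬝ᵥ τ = 0) :
    projPerp τ n = n := by
  simp [projPerp, nrm, hnτ, hn]

theorem hasDerivAt_projPerp {d : ℕ} {τ : ℝ → Fin d → ℝ} {τ' n : Fin d → ℝ} {x : ℝ}
    (hτ : ∀ t, τ t ⬝ᵥ τ t = 1) (hn : n ⬝ᵥ n = 1) (hnτ : n ⬝ᵥ τ x = 0)
    (hτd : HasDerivAt τ τ' x) :
    HasDerivAt (fun t => projPerp (τ t) n) (-(n ⬝ᵥ τ') • τ x) x := by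
  have ha : HasDerivAt (fun t => n ⬝ᵥ τ t) (n ⬝ᵥ τ') x := by
    simpa using (hasDerivAt_const x n).dotProduct hτd
  have hv : HasDerivAt (fun t => n - (n ⬝ᵥ τ t) • τ t) (-(n ⬝ᵥ τ') • τ x) x := by
    simpa [hnτ] using (hasDerivAt_const x n).fun_sub (ha.fun_smul hτd)
  have hnrm : ∀ t, nrm (n - (n ⬝ᵥ τ t) • τ t) = √(1 - (n ⬝ᵥ τ t) ^ 2) := fun t => by
    rw [nrm, dotProduct_self_sub_smul_of_dotProduct_self_eq_one (hτ t), hn]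
  have hs : HasDerivAt (fun t => (√(1 - (n ⬝ᵥ τ t) ^ 2))⁻¹) 0 x := by
    simpa [hnτ] using (((ha.fun_pow 2).const_sub 1).sqrt (by simp [hnτ])).fun_inv (by simp [hnτ])
  simpa [projPerp, hnrm, hnτ] using hs.fun_smul hv

lemma one_sub_vecMulVec_mul_sub_transpose_mulVec_dotProduct {ι R : Type*} [Fintype ι]
    [DecidableEq ι] [CommRing R] (B : Matrix ι ι R) (μ : ι → R) {τ n : ι → R}
    (hnτ : n ⬝ᵥ τ = 0) :
    (((1 - vecMulVec τ τ) * B - Bᵀ) *ᵥ μ) ⬝ᵥ n = ((B - Bᵀ) *ᵥ μ) ⬝ᵥ n := by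
  rw [Matrix.sub_mul, one_mul, sub_right_comm, sub_mulVec, sub_dotProduct, ← mulVec_mulVec,
    vecMulVec_mulVec, op_smul_eq_smul, smul_dotProduct, dotProduct_comm τ n, hnτ, smul_zero,
    sub_zero]

theorem stmt14_general (B : Matrix (Fin 3) (Fin 3) ℝ) (μ0 τ0 nb : Fin 3 → ℝ)
    (hnb : nrm nb = 1)
    (hμτ : μ0 ⬝ᵥ τ0 = 0) (hnτ : nb ⬝ᵥ τ0 = 0) (hlt : |μ0 ⬝ᵥ nb| < 1)
    (μ τ : ℝ → Fin 3 → ℝ) (hμ00 : μ 0 = μ0) (hτ00 : τ 0 = τ0)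
    (hτn : ∀ t, nrm (τ t) = 1)
    (hμd : HasDerivAt μ (((1 - vecMulVec τ0 τ0) * B - Bᵀ) *ᵥ μ0) 0)
    (hτd : HasDerivAt τ ((1 - vecMulVec τ0 τ0) *ᵥ (B *ᵥ τ0)) 0)
    (P : ℝ → Fin 3 → ℝ)
    (hP : ∀ t, P t = (nrm (nb - (nb ⬝ᵥ τ t) • τ t))⁻¹ • (nb - (nb ⬝ᵥ τ t) • τ t)) :
    HasDerivAt (fun t => Real.arccos (μ t ⬝ᵥ P t))
      (-(((B - Bᵀ) *ᵥ μ0) ⬝ᵥ nb) / Real.sqrt (1 - (μ0 ⬝ᵥ nb) ^ 2)) 0 := by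
  rw [nrm_eq_one_iff] at hnb
  have hP_eq : P = fun t => projPerp (τ t) nb := funext hP
  have hP0 : P 0 = nb := by rw [hP 0, hτ00]; exact projPerp_eq_self hnb hnτ
  have hPd := hasDerivAt_projPerp (fun t => nrm_eq_one_iff.mp (hτn t)) hnb (hτ00 ▸ hnτ) hτd
  rw [← hP_eq, hτ00] at hPd
  have hdot : HasDerivAt (fun t => μ t ⬝ᵥ P t) (((B - Bᵀ) *ᵥ μ0) ⬝ᵥ nb) 0 := by
    refine (hμd.dotProduct hPd).congr_deriv ?_
    rw [hP0, hμ00, dotProduct_smul, hμτ, smul_zero, add_zero,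
      one_sub_vecMulVec_mul_sub_transpose_mulVec_dotProduct B μ0 hnτ]
  simpa only [hμ00, hP0] using hdot.arccos (by rwa [hμ00, hP0])

theorem stmt14 (B : Matrix (Fin 3) (Fin 3) ℝ) (μ0 τ0 nb : Fin 3 → ℝ)
    (hμ0 : nrm μ0 = 1) (hτ0 : nrm τ0 = 1) (hnb : nrm nb = 1)
    (hμτ : μ0 ⬝ᵥ τ0 = 0) (hnτ : nb ⬝ᵥ τ0 = 0) (hlt : |μ0 ⬝ᵥ nb| < 1)
    (μ τ : ℝ → Fin 3 → ℝ) (hμ00 : μ 0 = μ0) (hτ00 : τ 0 = τ0)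
    (hμn : ∀ t, nrm (μ t) = 1) (hτn : ∀ t, nrm (τ t) = 1)
    (hμd : HasDerivAt μ (((1 - vecMulVec τ0 τ0) * B - Bᵀ) *ᵥ μ0) 0)
    (hτd : HasDerivAt τ ((1 - vecMulVec τ0 τ0) *ᵥ (B *ᵥ τ0)) 0)
    (P : ℝ → Fin 3 → ℝ)
    (hP : ∀ t, P t = (nrm (nb - (nb ⬝ᵥ τ t) • τ t))⁻¹ • (nb - (nb ⬝ᵥ τ t) • τ t)) :
    HasDerivAt (fun t => Real.arccos (μ t ⬝ᵥ P t))
      (-(((B - Bᵀ) *ᵥ μ0) ⬝ᵥ nb) / Real.sqrt (1 - (μ0 ⬝ᵥ nb) ^ 2)) 0 :=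
  stmt14_general B μ0 τ0 nb hnb hμτ hnτ hlt μ τ hμ00 hτ00 hτn hμd hτd P hP
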